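/- arXiv:2407.08178 — 5 statements merged into one kernel-verified Lean document; each statement's English description precedes it below -/
import Mathlib

section
/- Let η, ρ, γ, c > 0 and T ∈ (0, ∞]. Let m : [0, T) → ℝ be continuous with m(0) > 0, and let (t_j)_{j∈ℕ} be a strictly increasing sequence in [0, T) with t₀ = 0 and t_j → T. Suppose there are functions d, W, p : [0, T) → ℝ with p(t) ≥ 0 for all t, such that on each open interval (t_j, t_{j+1}) the function m is differentiable and satisfies m'(t) = −η·m(t) − ρ·d(t)² + p(t) + c·W(t), and suppose the trigger condition d(t)² ≤ γ·m(t) + (c/ρ)·W(t) holds for all t ∈ [0, T). Then m(t) ≥ m(0)·e^{−(η+γρ)t} for all t ∈ [0, T); in particular m(t) > 0 for all t ∈ [0, T). -/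
open Set Filter Real

/-- Lemma 1 (core analytic content): positivity of the dynamic variable of the
performance-barrier event trigger.  Between events, `m` obeys
`m' = -η m - ρ d² + p + c W`, the trigger guarantees `d² ≤ γ m + (c/ρ) W`,
and `m` is continuous across event times; hence `m(t) ≥ m(0) e^{-(η+γρ)t} > 0`. -/
theorem dynamic_variable_positivity
    (η ρ γ c : ℝ) (hη : 0 < η) (hρ : 0 < ρ) (hγ : 0 < γ) (hc : 0 < c)
    (T : EReal) (hT : 0 < T)
    (m d W p : ℝ → ℝ)
    (hm_cont : ContinuousOn m {s : ℝ | 0 ≤ s ∧ (s : EReal) < T})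
    (hm0 : 0 < m 0)
    (t : ℕ → ℝ) (ht_mono : StrictMono t) (ht0 : t 0 = 0)
    (ht_mem : ∀ j, 0 ≤ t j ∧ ((t j : ℝ) : EReal) < T)
    (ht_lim : Tendsto (fun j => ((t j : ℝ) : EReal)) atTop (nhds T))
    (hp : ∀ s : ℝ, 0 ≤ s → (s : EReal) < T → 0 ≤ p s)
    (hode : ∀ j, ∀ s ∈ Ioo (t j) (t (j + 1)),
      HasDerivAt m (-η * m s - ρ * (d s) ^ 2 + p s + c * W s) s)
    (htrig : ∀ s : ℝ, 0 ≤ s → (s : EReal) < T →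
      (d s) ^ 2 ≤ γ * m s + (c / ρ) * W s) :
    ∀ s : ℝ, 0 ≤ s → (s : EReal) < T →
      m 0 * Real.exp (-(η + γ * ρ) * s) ≤ m s ∧ 0 < m s := by
  set k : ℝ := η + γ * ρ with hk
  set g : ℝ → ℝ := fun x => m x * Real.exp (k * x) with hg
  -- On each inter-event interval, g is monotone on the closed interval.
  have hsub : ∀ j : ℕ, Icc (t j) (t (j + 1)) ⊆ {s : ℝ | 0 ≤ s ∧ (s : EReal) < T} := by
    intro j x hx
    refine ⟨le_trans (ht_mem j).1 hx.1, ?_⟩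
    exact lt_of_le_of_lt (EReal.coe_le_coe_iff.2 hx.2) (ht_mem (j + 1)).2
  have hmem : ∀ j : ℕ, ∀ x ∈ Ioo (t j) (t (j + 1)), 0 ≤ x ∧ (x : EReal) < T := by
    intro j x hx
    exact hsub j ⟨le_of_lt hx.1, le_of_lt hx.2⟩
  have key : ∀ j : ℕ, MonotoneOn g (Icc (t j) (t (j + 1))) := by
    intro j
    have hcont : ContinuousOn g (Icc (t j) (t (j + 1))) := by
      exact (hm_cont.mono (hsub j)).mul
        ((Real.continuous_exp.comp (continuous_const.mul continuous_id)).continuousOn)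
    have hint : interior (Icc (t j) (t (j + 1))) = Ioo (t j) (t (j + 1)) :=
      interior_Icc
    refine monotoneOn_of_hasDerivWithinAt_nonneg (f' := fun x =>
        (-η * m x - ρ * (d x) ^ 2 + p x + c * W x) * Real.exp (k * x)
          + m x * (Real.exp (k * x) * k))
      (convex_Icc _ _) hcont ?_ ?_
    · intro x hx
      rw [hint] at hx
      have hexp : HasDerivAt (fun y : ℝ => Real.exp (k * y)) (Real.exp (k * x) * k) x := by
        simpa using ((hasDerivAt_id x).const_mul k).exp
      exact (((hode j x hx).mul hexp)).hasDerivWithinAt.mono (by rw [hint])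
    · intro x hx
      rw [hint] at hx
      obtain ⟨hx0, hxT⟩ := hmem j x hx
      have htr := htrig x hx0 hxT
      have hpx := hp x hx0 hxT
      have hepos : 0 < Real.exp (k * x) := Real.exp_pos _
      have hcd : ρ * (c / ρ) = c := by field_simp
      have h1 : 0 ≤ (-η * m x - ρ * (d x) ^ 2 + p x + c * W x) + m x * k := by
        have h2 : ρ * (d x) ^ 2 ≤ ρ * (γ * m x + (c / ρ) * W x) :=
          mul_le_mul_of_nonneg_left htr (le_of_lt hρ)
        have h3 : ρ * (γ * m x + (c / ρ) * W x) = ρ * γ * m x + c * W x := by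
          field_simp
        have h4 : m x * k = η * m x + ρ * γ * m x := by rw [hk]; ring
        rw [h3] at h2
        linarith
      calc (0:ℝ) = ((-η * m x - ρ * (d x) ^ 2 + p x + c * W x) + m x * k) * 0 := by ring
        _ ≤ ((-η * m x - ρ * (d x) ^ 2 + p x + c * W x) + m x * k) * Real.exp (k * x) := by
            nlinarith
        _ = (-η * m x - ρ * (d x) ^ 2 + p x + c * W x) * Real.exp (k * x)
              + m x * (Real.exp (k * x) * k) := by ring
  -- chain across event times
  have hstep : ∀ j : ℕ, g (t j) ≤ g (t (j + 1)) := by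
    intro j
    exact key j (left_mem_Icc.2 (le_of_lt (ht_mono (Nat.lt_succ_self j))))
      (right_mem_Icc.2 (le_of_lt (ht_mono (Nat.lt_succ_self j))))
      (le_of_lt (ht_mono (Nat.lt_succ_self j)))
  have hchain : ∀ j : ℕ, g 0 ≤ g (t j) := by
    intro j
    induction j with
    | zero => rw [ht0]
    | succ n ih => exact le_trans ih (hstep n)
  intro s hs0 hsT
  -- find an event time beyond s
  have hev : ∃ n, s < t n := by
    have : ∀ᶠ n in atTop, (s : EReal) < (t n : ℝ) :=
      ht_lim.eventually_const_lt hsT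
    obtain ⟨n, hn⟩ := this.exists
    exact ⟨n, EReal.coe_lt_coe_iff.1 hn⟩
  classical
  set N : ℕ := Nat.find hev with hN
  have hNspec : s < t N := Nat.find_spec hev
  have hNne : N ≠ 0 := by
    intro h
    have := hNspec
    rw [h, ht0] at this
    exact absurd this (not_lt.2 hs0)
  obtain ⟨j, hj⟩ : ∃ j, N = j + 1 := ⟨N - 1, (Nat.succ_pred_eq_of_pos (Nat.pos_of_ne_zero hNne)).symm⟩
  have hjle : t j ≤ s := by
    by_contra h
    push_neg at h
    exact Nat.find_min hev (by omega : j < N) h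
  have hsIcc : s ∈ Icc (t j) (t (j + 1)) := ⟨hjle, le_of_lt (by rw [← hj]; exact hNspec)⟩
  have hgs : g 0 ≤ g s :=
    le_trans (hchain j) (key j (left_mem_Icc.2 (le_of_lt (ht_mono (Nat.lt_succ_self j))))
      hsIcc hjle)
  have hg0 : g 0 = m 0 := by simp [hg]
  have hes : Real.exp (-(k) * s) * Real.exp (k * s) = 1 := by
    rw [← Real.exp_add]
    norm_num [Real.exp_zero]
  have hepos : 0 < Real.exp (k * s) := Real.exp_pos _
  have heneg : 0 < Real.exp (-(k) * s) := Real.exp_pos _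
  have h1 : m 0 ≤ m s * Real.exp (k * s) := by rw [← hg0]; exact hgs
  have hlow : m 0 * Real.exp (-(η + γ * ρ) * s) ≤ m s := by
    have : m 0 * Real.exp (-(k) * s) ≤ m s := by nlinarith
    simpa [hk] using this
  refine ⟨hlow, lt_of_lt_of_le ?_ hlow⟩
  positivity
end

section
/- Let t* ≥ 0 and γ, ρ, c, η > 0. Let d, m^r, m^p, W : [t*, ∞) → ℝ be continuous with d(t*) = 0 and m^p(t*) = m^r(t*) > 0. Let t^p > t* be such that d(t)² ≤ γ·m^p(t) + (c/ρ)·W(t) for all t ∈ [t*, t^p], with equality at t = t^p (the performance-barrier trigger fires at t^p). Assume W(t) ≥ 0 for all t ∈ [t*, t^p], and assume m^p − m^r is differentiable on (t*, t^p) with (m^p − m^r)'(t) ≥ −η·(m^p(t) − m^r(t)). Then d(t^p)² ≥ γ·m^r(t^p); consequently the regular event time t^r := inf{ t ∈ (t*, ∞) : d(t)² ≥ γ·m^r(t) } satisfies t^r ≤ t^p. -/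
open Set Real

/-!
The gap `mp - mr` starts at `0` and satisfies `(mp - mr)' ≥ -η (mp - mr)`, so by a Grönwall
argument (monotonicity of `exp (η t) (mp - mr)(t)`) it stays nonnegative up to `t^p`. Hence
`γ m^r(t^p) ≤ γ m^p(t^p) ≤ γ m^p(t^p) + (c/ρ) W(t^p) = d(t^p)²`, so `t^p` itself belongs to the
set whose infimum defines `t^r`.
-/

theorem monotoneOn_exp_mul_of_neg_mul_le_deriv {f : ℝ → ℝ} {a b η : ℝ}
    (hf : ContinuousOn f (Icc a b))
    (hf' : ∀ s ∈ Ioo a b, ∃ D : ℝ, HasDerivAt f D s ∧ -η * f s ≤ D) :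
    MonotoneOn (fun x => exp (η * x) * f x) (Icc a b) := by
  choose! f' hf'_deriv hf'_ge using hf'
  have hderiv : ∀ s ∈ Ioo a b,
      HasDerivAt (fun x => exp (η * x) * f x) (exp (η * s) * (η * f s + f' s)) s := by
    intro s hs
    have hexp : HasDerivAt (fun x => exp (η * x)) (exp (η * s) * η) s := by
      simpa using ((hasDerivAt_id s).const_mul η).exp
    exact (hexp.mul (hf'_deriv s hs)).congr_deriv (by ring)
  refine monotoneOn_of_hasDerivWithinAt_nonneg (f' := fun s => exp (η * s) * (η * f s + f' s))
    (convex_Icc a b) ((continuous_exp.comp (continuous_const_mul η)).continuousOn.mul hf)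
    (fun s hs => ?_) (fun s hs => ?_)
  · rw [interior_Icc] at hs ⊢
    exact (hderiv s hs).hasDerivWithinAt
  · rw [interior_Icc] at hs
    have : 0 ≤ η * f s + f' s := by linarith [hf'_ge s hs]
    positivity

theorem nonneg_of_neg_mul_le_deriv {f : ℝ → ℝ} {a b η : ℝ} (hab : a ≤ b)
    (hf : ContinuousOn f (Icc a b)) (ha : 0 ≤ f a)
    (hf' : ∀ s ∈ Ioo a b, ∃ D : ℝ, HasDerivAt f D s ∧ -η * f s ≤ D) :
    0 ≤ f b := by
  have hmono : exp (η * a) * f a ≤ exp (η * b) * f b :=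
    monotoneOn_exp_mul_of_neg_mul_le_deriv hf hf' (left_mem_Icc.2 hab) (right_mem_Icc.2 hab) hab
  exact nonneg_of_mul_nonneg_right ((mul_nonneg (exp_pos _).le ha).trans hmono) (exp_pos _)

theorem regular_event_no_later_general
    (tstar : ℝ)
    (γ ρ c η : ℝ) (hγ : 0 < γ) (hρ : 0 < ρ) (hc : 0 < c)
    (d mr mp W : ℝ → ℝ)
    (hmr_cont : ContinuousOn mr (Ici tstar))
    (hmp_cont : ContinuousOn mp (Ici tstar))
    (hm_init_eq : mp tstar = mr tstar)
    (tp : ℝ) (htp : tstar < tp)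
    (htrig_eq : (d tp) ^ 2 = γ * mp tp + (c / ρ) * W tp)
    (hW_nonneg : ∀ s ∈ Icc tstar tp, 0 ≤ W s)
    (hdiff : ∀ s ∈ Ioo tstar tp, ∃ D : ℝ,
      HasDerivAt (fun x => mp x - mr x) D s ∧ -η * (mp s - mr s) ≤ D) :
    γ * mr tp ≤ (d tp) ^ 2 ∧
      sInf {s : ℝ | tstar < s ∧ γ * mr s ≤ (d s) ^ 2} ≤ tp := by
  have hgap : 0 ≤ mp tp - mr tp :=
    nonneg_of_neg_mul_le_deriv (f := fun x => mp x - mr x) htp.le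
      ((hmp_cont.sub hmr_cont).mono Icc_subset_Ici_self) (by simp [hm_init_eq]) hdiff
  have hWtp : 0 ≤ W tp := hW_nonneg tp (right_mem_Icc.2 htp.le)
  have hreg : γ * mr tp ≤ (d tp) ^ 2 :=
    calc γ * mr tp ≤ γ * mp tp := by gcongr; linarith
      _ ≤ γ * mp tp + (c / ρ) * W tp := le_add_of_nonneg_right (by positivity)
      _ = (d tp) ^ 2 := htrig_eq.symm
  exact ⟨hreg, csInf_le ⟨tstar, fun s hs => hs.1.le⟩ ⟨htp, hreg⟩⟩

/-- Lemma 2: if an event occurred at `t*` (so `d(t*) = 0`), the dynamic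
variables start equal, the performance residual `W` is nonnegative, and the
performance-barrier trigger fires at `t^p`, then the regular trigger
`d² ≥ γ m^r` also holds at `t^p`; consequently the regular event time
`t^r = inf { t > t* : d(t)² ≥ γ m^r(t) }` satisfies `t^r ≤ t^p`. -/
theorem regular_event_no_later
    (tstar : ℝ) (htstar : 0 ≤ tstar)
    (γ ρ c η : ℝ) (hγ : 0 < γ) (hρ : 0 < ρ) (hc : 0 < c) (hη : 0 < η)
    (d mr mp W : ℝ → ℝ)
    (hd_cont : ContinuousOn d (Ici tstar))
    (hmr_cont : ContinuousOn mr (Ici tstar))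
    (hmp_cont : ContinuousOn mp (Ici tstar))
    (hW_cont : ContinuousOn W (Ici tstar))
    (hd0 : d tstar = 0)
    (hm_init_eq : mp tstar = mr tstar) (hm_init_pos : 0 < mr tstar)
    (tp : ℝ) (htp : tstar < tp)
    (htrig_le : ∀ s ∈ Icc tstar tp, (d s) ^ 2 ≤ γ * mp s + (c / ρ) * W s)
    (htrig_eq : (d tp) ^ 2 = γ * mp tp + (c / ρ) * W tp)
    (hW_nonneg : ∀ s ∈ Icc tstar tp, 0 ≤ W s)
    (hdiff : ∀ s ∈ Ioo tstar tp, ∃ D : ℝ,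
      HasDerivAt (fun x => mp x - mr x) D s ∧ -η * (mp s - mr s) ≤ D) :
    γ * mr tp ≤ (d tp) ^ 2 ∧
      sInf {s : ℝ | tstar < s ∧ γ * mr s ≤ (d s) ^ 2} ≤ tp :=
  regular_event_no_later_general tstar γ ρ c η hγ hρ hc d mr mp W hmr_cont hmp_cont hm_init_eq tp
    htp htrig_eq hW_nonneg hdiff
end

section
/- Let b, c > 0, V₀ ∈ ℝ, and T ∈ (0, ∞]. Let V : [0, T) → ℝ be continuous with V(0) = V₀, and let (t_j)_{j∈ℕ} be a strictly increasing sequence in [0, T) with t₀ = 0 and t_j → T. Suppose that on each open interval (t_j, t_{j+1}) the function V is differentiable and satisfies V'(t) ≤ −b·V(t) + c·(e^{−bt}·V₀ − V(t)). Then V(t) ≤ e^{−bt}·V₀ for all t ∈ [0, T). -/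
open Set Filter Real

/-- R4 of Theorem 1 (ODE content): a Lyapunov function continuous across event
times, starting on the performance-barrier `e^{-bt} V₀`, and satisfying
`V' ≤ -b V + c (e^{-bt} V₀ - V)` between events, never exceeds the barrier. -/
theorem lyapunov_below_performance_barrier
    (b c : ℝ) (hb : 0 < b) (hc : 0 < c) (V₀ : ℝ)
    (T : EReal) (hT : 0 < T)
    (V : ℝ → ℝ)
    (hV_cont : ContinuousOn V {s : ℝ | 0 ≤ s ∧ (s : EReal) < T})
    (hV0 : V 0 = V₀)
    (t : ℕ → ℝ) (ht_mono : StrictMono t) (ht0 : t 0 = 0)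
    (ht_mem : ∀ j, 0 ≤ t j ∧ ((t j : ℝ) : EReal) < T)
    (ht_lim : Tendsto (fun j => ((t j : ℝ) : EReal)) atTop (nhds T))
    (hode : ∀ j, ∀ s ∈ Ioo (t j) (t (j + 1)), ∃ V' : ℝ,
      HasDerivAt V V' s ∧ V' ≤ -b * V s + c * (Real.exp (-b * s) * V₀ - V s)) :
    ∀ s : ℝ, 0 ≤ s → (s : EReal) < T → V s ≤ Real.exp (-b * s) * V₀ := by
  set g : ℝ → ℝ := fun u => (V u - Real.exp (-b * u) * V₀) * Real.exp ((b + c) * u) with hg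
  have hsub : ∀ j, Icc (t j) (t (j + 1)) ⊆ {s : ℝ | 0 ≤ s ∧ (s : EReal) < T} := by
    intro j s hs
    refine ⟨le_trans (ht_mem j).1 hs.1, lt_of_le_of_lt ?_ (ht_mem (j + 1)).2⟩
    exact_mod_cast EReal.coe_le_coe_iff.mpr hs.2
  -- derivative facts on each open interval
  have hderiv : ∀ j, ∀ s ∈ Ioo (t j) (t (j + 1)), ∃ g' : ℝ, HasDerivAt g g' s ∧ g' ≤ 0 := by
    intro j s hs
    obtain ⟨V', hV', hle⟩ := hode j s hs
    have hE : HasDerivAt (fun u => Real.exp (-b * u) * V₀)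
        ((-b * Real.exp (-b * s)) * V₀) s := by
      have := ((hasDerivAt_id s).const_mul (-b)).exp
      simpa [mul_comm, mul_assoc, mul_left_comm] using this.mul_const V₀
    have hF : HasDerivAt (fun u => Real.exp ((b + c) * u))
        ((b + c) * Real.exp ((b + c) * s)) s := by
      have := ((hasDerivAt_id s).const_mul (b + c)).exp
      simpa [mul_comm] using this
    have hG : HasDerivAt g
        ((V' - (-b * Real.exp (-b * s)) * V₀) * Real.exp ((b + c) * s)
          + (V s - Real.exp (-b * s) * V₀) * ((b + c) * Real.exp ((b + c) * s))) s :=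
      (hV'.sub hE).mul hF
    refine ⟨_, hG, ?_⟩
    have h1 : (0:ℝ) < Real.exp ((b + c) * s) := Real.exp_pos _
    nlinarith [mul_le_mul_of_nonneg_right hle h1.le]
  have hanti : ∀ j, AntitoneOn g (Icc (t j) (t (j + 1))) := by
    intro j
    have hcont : ContinuousOn g (Icc (t j) (t (j + 1))) :=
      ((hV_cont.mono (hsub j)).sub (Continuous.continuousOn (by continuity))).mul
        (Continuous.continuousOn (by continuity))
    have hdiff : ∀ s ∈ interior (Icc (t j) (t (j + 1))), HasDerivAt g (deriv g s) s := by
      intro s hs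
      rw [interior_Icc] at hs
      obtain ⟨g', hg', _⟩ := hderiv j s hs
      simpa [hg'.deriv] using hg'
    refine antitoneOn_of_deriv_nonpos (convex_Icc _ _) hcont
      (fun s hs => (hdiff s hs).differentiableAt.differentiableWithinAt) ?_
    intro s hs
    rw [interior_Icc] at hs
    obtain ⟨g', hg', hle⟩ := hderiv j s hs
    rwa [hg'.deriv]
  -- g (t j) ≤ 0 by induction
  have hgt : ∀ j, g (t j) ≤ 0 := by
    intro j
    induction j with
    | zero => simp [hg, ht0, hV0]
    | succ k ih =>
      have := hanti k (left_mem_Icc.mpr (ht_mono (Nat.lt_succ_self k)).le)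
        (right_mem_Icc.mpr (ht_mono (Nat.lt_succ_self k)).le)
        (ht_mono (Nat.lt_succ_self k)).le
      linarith
  intro s hs0 hsT
  -- find j with t j ≤ s ≤ t (j+1)
  have hex : ∃ j, s < t j := by
    have : ∀ᶠ x in nhds T, (s : EReal) < x := isOpen_Ioi.eventually_mem hsT
    obtain ⟨j, hj⟩ := (ht_lim.eventually this).exists
    exact ⟨j, by exact_mod_cast hj⟩
  classical
  have hks : s < t (Nat.find hex) := Nat.find_spec hex
  have hkpos : Nat.find hex ≠ 0 := by
    intro h
    rw [h, ht0] at hks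
    exact absurd hks (not_lt.mpr hs0)
  obtain ⟨m, hm⟩ := Nat.exists_eq_succ_of_ne_zero hkpos
  rw [hm] at hks
  have hms : t m ≤ s := le_of_not_gt (Nat.find_min hex (by omega))
  have hgs : g s ≤ g (t m) :=
    hanti m (left_mem_Icc.mpr (le_trans hms hks.le)) ⟨hms, hks.le⟩ hms
  have h2 : (V s - Real.exp (-b * s) * V₀) * Real.exp ((b + c) * s) ≤ 0 :=
    le_trans hgs (hgt m)
  have h1 : (0:ℝ) < Real.exp ((b + c) * s) := Real.exp_pos _
  nlinarith [h2, h1]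
end

section
/- Let η, γ, ρ, ρ₁ > 0 and set a = 1 + ρ₁ + η. Let A be the real 2×2 matrix with rows (1 + ρ₁ + γρ, γ(a + γρ)) and (−ρ, −(γρ + η)). Then for every t ∈ ℝ, the matrix exponential satisfies exp(tA) = (ρ/a) · P · D(t) · Q, where P is the 2×2 matrix with rows (−γ, −(a+γρ)/ρ) and (1, 1), D(t) is the diagonal matrix diag(e^{−ηt}, e^{(1+ρ₁)t}), and Q is the 2×2 matrix with rows (1, (a+γρ)/ρ) and (−1, −γ). -/
open Matrix Real

/-! The columns of `P` are eigenvectors of `A` for `-η` and `1 + ρ₁`, and `Q` is the inverse of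
`(ρ / a) • P`, so `t • A` is conjugate to `diagonal ![-η * t, (1 + ρ₁) * t]`; the exponential
commutes with conjugation and acts entrywise on diagonal matrices. -/

theorem Matrix.exp_conj_diagonal {n : Type*} [Fintype n] [DecidableEq n]
    {S Q : Matrix n n ℝ} (hSQ : S * Q = 1) (d : n → ℝ) :
    NormedSpace.exp (S * diagonal d * Q) = S * diagonal (fun i => Real.exp (d i)) * Q := by
  let U : (Matrix n n ℝ)ˣ := ⟨S, Q, hSQ, mul_eq_one_comm.mp hSQ⟩
  have hconj := Matrix.exp_units_conj U (diagonal d)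
  rwa [Matrix.exp_diagonal, Pi.exp_def, ← Real.exp_eq_exp_ℝ] at hconj

theorem Matrix.smul_conj_diagonal {n : Type*} [Fintype n] [DecidableEq n]
    (S Q : Matrix n n ℝ) (d : n → ℝ) (t : ℝ) :
    t • (S * diagonal d * Q) = S * diagonal (t • d) * Q := by
  rw [diagonal_smul, Matrix.mul_smul, Matrix.smul_mul]

section Diagonalization

variable (η γ ρ ρ₁ a : ℝ)

theorem eigenvector_matrix_mul_eq_one (hρ : ρ ≠ 0) (ha : a ≠ 0) :
    (ρ / a) • !![-γ, -((a + γ * ρ) / ρ); 1, 1] * !![1, (a + γ * ρ) / ρ; -1, -γ] = 1 := by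
  ext i j
  fin_cases i <;> fin_cases j <;> simp [Matrix.mul_apply, Fin.sum_univ_two] <;> field_simp <;> ring

theorem triggering_matrix_eq_conj_diagonal (hρ : ρ ≠ 0) (ha₀ : a ≠ 0) (ha : a = 1 + ρ₁ + η) :
    !![1 + ρ₁ + γ * ρ, γ * (a + γ * ρ); -ρ, -(γ * ρ + η)] =
      (ρ / a) • !![-γ, -((a + γ * ρ) / ρ); 1, 1] * diagonal ![-η, 1 + ρ₁] *
        !![1, (a + γ * ρ) / ρ; -1, -γ] := by
  subst ha
  rw [diagonal_vec2]
  ext i j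
  fin_cases i <;> fin_cases j <;> simp [Matrix.mul_apply, Fin.sum_univ_two] <;> field_simp <;>
    ring

end Diagonalization

theorem matrix_exponential_formula_general
    (η γ ρ ρ₁ : ℝ) (hη : 0 < η) (hρ : 0 < ρ) (hρ₁ : 0 < ρ₁)
    (a : ℝ) (ha : a = 1 + ρ₁ + η)
    (A : Matrix (Fin 2) (Fin 2) ℝ)
    (hA : A = !![1 + ρ₁ + γ * ρ, γ * (a + γ * ρ); -ρ, -(γ * ρ + η)])
    (P : Matrix (Fin 2) (Fin 2) ℝ)
    (hP : P = !![-γ, -((a + γ * ρ) / ρ); 1, 1])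
    (Q : Matrix (Fin 2) (Fin 2) ℝ)
    (hQ : Q = !![1, (a + γ * ρ) / ρ; -1, -γ])
    (D : ℝ → Matrix (Fin 2) (Fin 2) ℝ)
    (hD : ∀ t : ℝ, D t = !![Real.exp (-η * t), 0; 0, Real.exp ((1 + ρ₁) * t)]) :
    ∀ t : ℝ, NormedSpace.exp (t • A) = (ρ / a) • (P * D t * Q) := by
  intro t
  have ha₀ : a ≠ 0 := by rw [ha]; positivity
  have hexp : diagonal (fun i => Real.exp ((t • ![-η, 1 + ρ₁]) i)) = D t := by
    rw [hD t]
    ext i j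
    fin_cases i <;> fin_cases j <;> simp [mul_comm]
  rw [hA, triggering_matrix_eq_conj_diagonal η γ ρ ρ₁ a hρ.ne' ha₀ ha, Matrix.smul_conj_diagonal,
    Matrix.exp_conj_diagonal (eigenvector_matrix_mul_eq_one γ ρ a hρ.ne' ha₀), hexp, hP, hQ,
    Matrix.smul_mul, Matrix.smul_mul]

/-- Explicit matrix-exponential formula (proof of Proposition 2): for the
matrix `A` governing the joint `(Γ*, m)` dynamics under performance-barrier
periodic event-triggered control, `exp(tA) = (ρ/a) P D(t) Q` by
diagonalization, where `a = 1 + ρ₁ + η`. -/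
theorem matrix_exponential_formula
    (η γ ρ ρ₁ : ℝ) (hη : 0 < η) (hγ : 0 < γ) (hρ : 0 < ρ) (hρ₁ : 0 < ρ₁)
    (a : ℝ) (ha : a = 1 + ρ₁ + η)
    (A : Matrix (Fin 2) (Fin 2) ℝ)
    (hA : A = !![1 + ρ₁ + γ * ρ, γ * (a + γ * ρ); -ρ, -(γ * ρ + η)])
    (P : Matrix (Fin 2) (Fin 2) ℝ)
    (hP : P = !![-γ, -((a + γ * ρ) / ρ); 1, 1])
    (Q : Matrix (Fin 2) (Fin 2) ℝ)
    (hQ : Q = !![1, (a + γ * ρ) / ρ; -1, -γ])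
    (D : ℝ → Matrix (Fin 2) (Fin 2) ℝ)
    (hD : ∀ t : ℝ, D t = !![Real.exp (-η * t), 0; 0, Real.exp ((1 + ρ₁) * t)]) :
    ∀ t : ℝ, NormedSpace.exp (t • A) = (ρ / a) • (P * D t * Q) :=
  matrix_exponential_formula_general η γ ρ ρ₁ hη hρ hρ₁ a ha A hA P hP Q hQ D hD
end

section
/- Let η, γ, ρ, ρ₁, α > 0, σ ∈ (0, 1), set a = 1 + ρ₁ + η, β = α/(γ(1−σ)), and τ = (1/a)·ln(1 + σa/((1−σ)(a+γρ))). Define g₁(t) = (1/a)·(−γρ + (a+γρ)e^{at})·e^{−ηt} and g₂(t) = (γ(a+γρ)/a)·(−1 + e^{at})·e^{−ηt}. Then for every s ∈ ℝ, (γβ − α)·g₁(s) − β·g₂(s) = (α(a+γρ)/a)·(e^{aτ} − e^{as})·e^{−ηs}; in particular this quantity is strictly positive for all s with 0 ≤ s < τ. -/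
open Real

/-- Identity (84) in the proof of Proposition 2: with the event-trigger gain
`β = α/(γ(1-σ))` and `τ` the minimal dwell-time, the coefficient
`(γβ - α) g₁(s) - β g₂(s)` equals `(α(a+γρ)/a)(e^{aτ} - e^{as}) e^{-ηs}`,
which is strictly positive for `0 ≤ s < τ`. -/
theorem coefficient_identity_and_positivity
    (η γ ρ ρ₁ α σ : ℝ) (hη : 0 < η) (hγ : 0 < γ) (hρ : 0 < ρ) (hρ₁ : 0 < ρ₁)
    (hα : 0 < α) (hσ : σ ∈ Set.Ioo (0 : ℝ) 1)
    (a : ℝ) (ha : a = 1 + ρ₁ + η)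
    (β : ℝ) (hβ : β = α / (γ * (1 - σ)))
    (τ : ℝ) (hτ : τ = (1 / a) * Real.log (1 + σ * a / ((1 - σ) * (a + γ * ρ))))
    (g₁ g₂ : ℝ → ℝ)
    (hg₁ : ∀ s : ℝ, g₁ s =
      (1 / a) * (-(γ * ρ) + (a + γ * ρ) * Real.exp (a * s)) * Real.exp (-η * s))
    (hg₂ : ∀ s : ℝ, g₂ s =
      (γ * (a + γ * ρ) / a) * (-1 + Real.exp (a * s)) * Real.exp (-η * s)) :
    (∀ s : ℝ, (γ * β - α) * g₁ s - β * g₂ s =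
        (α * (a + γ * ρ) / a) * (Real.exp (a * τ) - Real.exp (a * s)) *
          Real.exp (-η * s)) ∧
      ∀ s : ℝ, 0 ≤ s → s < τ →
        0 < (γ * β - α) * g₁ s - β * g₂ s := by

  obtain ⟨hσ0, hσ1⟩ := hσ
  have h1σ : 0 < 1 - σ := by linarith
  have ha0 : 0 < a := by rw [ha]; linarith
  have haρ : 0 < a + γ * ρ := by positivity
  have harg : 0 < 1 + σ * a / ((1 - σ) * (a + γ * ρ)) := by positivity
  have hexpτ : Real.exp (a * τ) = 1 + σ * a / ((1 - σ) * (a + γ * ρ)) := by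
    rw [hτ]
    rw [show a * (1 / a * Real.log (1 + σ * a / ((1 - σ) * (a + γ * ρ)))) =
        Real.log (1 + σ * a / ((1 - σ) * (a + γ * ρ))) by field_simp]
    exact Real.exp_log harg
  have hid : ∀ s : ℝ, (γ * β - α) * g₁ s - β * g₂ s =
      (α * (a + γ * ρ) / a) * (Real.exp (a * τ) - Real.exp (a * s)) *
        Real.exp (-η * s) := by
    intro s
    rw [hg₁ s, hg₂ s, hβ, hexpτ]
    field_simp
    ring
  refine ⟨hid, fun s hs0 hsτ => ?_⟩
  rw [hid s]
  have : Real.exp (a * s) < Real.exp (a * τ) := by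
    apply Real.exp_lt_exp.2
    exact mul_lt_mul_of_pos_left hsτ ha0
  have h1 : 0 < α * (a + γ * ρ) / a := by positivity
  have h2 : 0 < Real.exp (-η * s) := Real.exp_pos _
  nlinarith [mul_pos (mul_pos h1 (sub_pos.2 this)) h2]
end
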